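/- arXiv:1010.3263 — 2 statements merged into one kernel-verified Lean document; each statement's English description precedes it below -/
import Mathlib

section
/- If 1 ≤ n ≤ 3 and L is a left ideal or a suffix-closed regular language over a finite alphabet Σ with quotient complexity κ(L) = n, then σ(L) ≤ n^{n-1} + n - 1 (i.e., σ(L) ≤ 1 for n = 1, σ(L) ≤ 3 for n = 2, and σ(L) ≤ 11 for n = 3). -/
/-- The left quotient of a language `L` by a word `w`: `{x | w ++ x ∈ L}`. -/
def leftQ {α : Type*} (L : Set (List α)) (w : List α) : Set (List α) :=
  {x | w ++ x ∈ L}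

/-- Quotient (state) complexity: the number of distinct left quotients of `L`. -/
noncomputable def quotCompl {α : Type*} (L : Set (List α)) : ℕ :=
  Nat.card (Set.range (leftQ L))

/-- The syntactic (Myhill) congruence of `L`. -/
def synRel {α : Type*} (L : Set (List α)) (x y : List α) : Prop :=
  ∀ u v : List α, u ++ x ++ v ∈ L ↔ u ++ y ++ v ∈ L

/-- The syntactic setoid on the free semigroup of non-empty words. -/
def synSetoid {α : Type*} (L : Set (List α)) : Setoid {w : List α // w ≠ []} :=
  ⟨fun x y => synRel L x.1 y.1,
   ⟨fun _ _ _ => Iff.rfl, fun h u v => (h u v).symm,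
    fun h₁ h₂ u v => (h₁ u v).trans (h₂ u v)⟩⟩

/-- Syntactic complexity: the cardinality of the syntactic semigroup of `L`. -/
noncomputable def synCompl {α : Type*} (L : Set (List α)) : ℕ :=
  Nat.card (Quotient (synSetoid L))

/-- `L` is a right ideal: it is non-empty and `L = LΣ*`. -/
def IsRightIdeal {α : Type*} (L : Set (List α)) : Prop :=
  L.Nonempty ∧ L = {x | ∃ u ∈ L, ∃ v : List α, x = u ++ v}

/-- `L` is a left ideal: it is non-empty and `L = Σ*L`. -/
def IsLeftIdeal {α : Type*} (L : Set (List α)) : Prop :=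
  L.Nonempty ∧ L = {x | ∃ u : List α, ∃ v ∈ L, x = u ++ v}

/-- `L` is a two-sided ideal: it is non-empty and `L = Σ*LΣ*`. -/
def IsTwoSidedIdeal {α : Type*} (L : Set (List α)) : Prop :=
  L.Nonempty ∧ L = {x | ∃ u : List α, ∃ w ∈ L, ∃ v : List α, x = u ++ w ++ v}

/-- The reverse of a language. -/
def langReverse {α : Type*} (L : Set (List α)) : Set (List α) :=
  List.reverse '' L

/-- A DFA is minimal: every state is reachable from the start state, and no two
distinct states accept the same set of words. -/
def DFAMinimal {α σ : Type*} (M : DFA α σ) : Prop :=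
  (∀ q : σ, ∃ w : List α, M.evalFrom M.start w = q) ∧
  ∀ p q : σ, (∀ w : List α, M.evalFrom p w ∈ M.accept ↔ M.evalFrom q w ∈ M.accept) → p = q

/-!
A word `w` acts on the quotients of `L` by `K ↦ w⁻¹K`; this action is monotone for inclusion,
and two words are syntactically equivalent exactly when they act alike. So `σ(L)` is at most the
number of monotone self-maps of the poset of quotients. `L` itself is the least quotient when `L`
is a left ideal and the greatest one when `L` is suffix-closed, and a poset of `n ≤ 3` elements
with a least or a greatest element has at most `n ^ (n - 1) + n - 1` monotone self-maps (by
enumeration); the bound `11` for `n = 3` is attained by the poset `⊥ < a, ⊥ < b`.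
-/

section OrderHomCount

variable {P : Type*} [PartialOrder P]

def orderHomEquivOfRelIso {ι : Type*} {r : ι → ι → Prop}
    (e : r ≃r ((· ≤ ·) : P → P → Prop)) :
    (P →o P) ≃ {g : ι → ι // ∀ i j, r i j → r (g i) (g j)} where
  toFun f := ⟨e.symm ∘ f ∘ e, fun _ _ h =>
    e.map_rel_iff.1 (by simpa using f.monotone (e.map_rel_iff.2 h))⟩
  invFun g := ⟨e ∘ g.1 ∘ e.symm, fun _ _ h =>
    e.map_rel_iff.2 (g.2 _ _ (e.map_rel_iff.1 (by simpa using h)))⟩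
  left_inv f := by ext x; show e (e.symm (f (e (e.symm x)))) = f x; simp
  right_inv g := by ext i; show e.symm (e (g.1 (e.symm (e i)))) = g.1 i; simp

set_option maxRecDepth 10000 in
theorem card_relEndo_le_of_le_two {k : ℕ} (hk : k ≤ 2)
    (r : Fin (k + 1) → Fin (k + 1) → Bool) (hrefl : ∀ i, r i i)
    (hanti : ∀ i j, r i j → r j i → i = j) (hext : ∃ z, (∀ j, r z j) ∨ ∀ j, r j z) :
    Fintype.card {g : Fin (k + 1) → Fin (k + 1) // ∀ i j, r i j → r (g i) (g j)} ≤
      (k + 1) ^ k + k := by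
  interval_cases k <;> revert r <;> decide

theorem card_orderHom_le_of_card_le_three [Finite P] (hP : ∃ z : P, IsBot z ∨ IsTop z)
    (h3 : Nat.card P ≤ 3) :
    Nat.card (P →o P) ≤ Nat.card P ^ (Nat.card P - 1) + Nat.card P - 1 := by
  classical
  obtain ⟨z, hz⟩ := hP
  have : Nonempty P := ⟨z⟩
  obtain ⟨k, hk⟩ := Nat.exists_eq_add_of_le' (Nat.card_pos (α := P))
  let e : Fin (k + 1) ≃ P := (Finite.equivFinOfCardEq hk).symm
  let r : Fin (k + 1) → Fin (k + 1) → Bool := fun i j => decide (e i ≤ e j)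
  let eRel : (fun i j => r i j = true) ≃r ((· ≤ ·) : P → P → Prop) :=
    ⟨e, fun {i j} => by simp [r]⟩
  have hcard := card_relEndo_le_of_le_two (by omega) r (fun i => by simp [r])
    (fun _ _ hij hji => e.injective (le_antisymm (by simpa [r] using hij) (by simpa [r] using hji)))
    ⟨e.symm z, hz.imp (fun h j => by simpa [r] using h (e j))
      (fun h j => by simpa [r] using h (e j))⟩
  rw [Nat.card_congr (orderHomEquivOfRelIso eRel), Nat.card_eq_fintype_card, hk]
  simpa using hcard

end OrderHomCount

section Quotients

variable {α : Type*} (L : Set (List α))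

theorem leftQ_nil : leftQ L [] = L := rfl

theorem leftQ_append (u w : List α) : leftQ L (u ++ w) = leftQ (leftQ L u) w := by
  ext x; simp [leftQ]

def leftQAction (w : List α) : Set.range (leftQ L) →o Set.range (leftQ L) where
  toFun K := ⟨leftQ K w, by
    obtain ⟨u, hu⟩ := K.2
    exact ⟨u ++ w, by rw [leftQ_append, hu]⟩⟩
  monotone' _ _ h _ hx := h hx

theorem leftQAction_leftQ (w u : List α) :
    (leftQAction L w ⟨leftQ L u, u, rfl⟩ : Set (List α)) = leftQ L (u ++ w) :=
  (leftQ_append L u w).symm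

theorem synRel_iff_leftQAction_eq (x y : List α) :
    synRel L x y ↔ leftQAction L x = leftQAction L y := by
  have hquot : synRel L x y ↔ ∀ u, leftQ L (u ++ x) = leftQ L (u ++ y) := by
    simp only [synRel, Set.ext_iff, leftQ, Set.mem_ofPred_eq, List.append_assoc]
  rw [hquot]
  constructor
  · intro h
    ext ⟨_, u, rfl⟩ : 3
    exact (leftQ_append L u x).symm.trans ((h u).trans (leftQ_append L u y))
  · intro h u
    rw [← leftQAction_leftQ, ← leftQAction_leftQ, h]

theorem synCompl_le_card_orderHom [Finite (Set.range (leftQ L))] :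
    synCompl L ≤ Nat.card (Set.range (leftQ L) →o Set.range (leftQ L)) := by
  have hker : synSetoid L = Setoid.ker fun w => leftQAction L w.1 :=
    Setoid.ext fun x y => synRel_iff_leftQAction_eq L x.1 y.1
  have : Finite (Set.range (leftQ L) →o Set.range (leftQ L)) :=
    Finite.of_injective _ DFunLike.coe_injective
  rw [synCompl, hker]
  exact Nat.card_le_card_of_injective _ (Setoid.kerLift_injective _)

def selfQuotient : Set.range (leftQ L) := ⟨L, [], leftQ_nil L⟩

theorem isBot_selfQuotient_of_isLeftIdeal (hL : IsLeftIdeal L) : IsBot (selfQuotient L) := by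
  rintro ⟨_, u, rfl⟩ x hx
  show u ++ x ∈ L
  rw [hL.2]
  exact ⟨u, x, hx, rfl⟩

theorem isTop_selfQuotient_of_suffixClosed
    (hL : ∀ w ∈ L, ∀ v : List α, v <:+ w → v ∈ L) : IsTop (selfQuotient L) := by
  rintro ⟨_, u, rfl⟩ x hx
  exact hL _ hx x ⟨u, rfl⟩

end Quotients

theorem stmt_16_general {α : Type*} (L : Set (List α))
    (hreg : (Set.range (leftQ L)).Finite) (n : ℕ) (hn3 : n ≤ 3)
    (hn : quotCompl L = n)
    (hL : IsLeftIdeal L ∨ ∀ w ∈ L, ∀ v : List α, v <:+ w → v ∈ L) :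
    synCompl L ≤ n ^ (n - 1) + n - 1 := by
  have := hreg.to_subtype
  have hext : ∃ z : Set.range (leftQ L), IsBot z ∨ IsTop z :=
    ⟨selfQuotient L, hL.imp (isBot_selfQuotient_of_isLeftIdeal L)
      (isTop_selfQuotient_of_suffixClosed L)⟩
  rw [← hn, quotCompl] at hn3 ⊢
  exact (synCompl_le_card_orderHom L).trans (card_orderHom_le_of_card_le_three hext hn3)

/-- If `1 ≤ n ≤ 3` and `L` is a left ideal or a suffix-closed
regular language with quotient complexity `n`, then `σ(L) ≤ n^{n-1} + n - 1`. -/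
theorem stmt_16 {α : Type*} [Fintype α] (L : Set (List α))
    (hreg : (Set.range (leftQ L)).Finite) (n : ℕ) (hn1 : 1 ≤ n) (hn3 : n ≤ 3)
    (hn : quotCompl L = n)
    (hL : IsLeftIdeal L ∨ ∀ w ∈ L, ∀ v : List α, v <:+ w → v ∈ L) :
    synCompl L ≤ n ^ (n - 1) + n - 1 :=
  stmt_16_general L hreg n hn3 hn hL
end

section
/- For every n ≥ 3 there exists a left ideal L over a four-letter alphabet with quotient complexity κ(L) = n whose reverse L^R has quotient complexity exactly 2^{n-1} + 1; such a witness is the language accepted by the DFA with states {0,1,…,n-1}, initial state 0, final state set a non-empty subset of {1,…,n-1}, and letters a = the cycle (1,2,…,n-1) fixing 0, c mapping n-1 to 1 and fixing all other states, d mapping n-1 to 0 and fixing all other states, and e mapping every state to 1. -/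
/-- The transition function of the automaton of Theorem 5 restricted to the
letters `{a, c, d, e}`: `a = (1,2,…,n-1)` fixing `0`, `c : n-1 ↦ 1`,
`d : n-1 ↦ 0`, and `e` maps every state to `1`. -/
def step17 (n : ℕ) (hn : 3 ≤ n) : Fin n → Fin 4 → Fin n := fun q l =>
  if l.val = 0 then -- a : the cycle (1, 2, …, n-1), fixing 0
    if q.val = 0 then q
    else if _h : q.val = n - 1 then ⟨1, by omega⟩
    else ⟨q.val + 1, by have := q.isLt; omega⟩
  else if l.val = 1 then -- c : n-1 ↦ 1, fixing all other states
    if q.val = n - 1 then ⟨1, by omega⟩ else q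
  else if l.val = 2 then -- d : n-1 ↦ 0, fixing all other states
    if q.val = n - 1 then ⟨0, by omega⟩ else q
  else -- e : the constant transformation sending every state to 1
    ⟨1, by omega⟩

/-!
State `0` is a non-final sink for `a`, `c`, `d`, while `e` sends every state to `1`. So an
accepted word contains `e`, and from its first `e` on it runs identically from every state:
the language is a left ideal.

The quotients of the reverse correspond to the sets `S_u = {q | q·u ∈ F}`, and the preimage
of `S_u` under the action of a letter `x` is `S_{xu}`. Each `S_u` avoids `0` or is everything.
Conversely, since `a` is the cycle `(1 … n-1)` fixing `0`, conjugating `d` and `c` by powers of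
`a` removes any state from such a set, or adds a state whose `a`-image already lies in it.
Starting from `F` this reaches every subset of `{1, …, n-1}`, and `e` then gives the full set:
`2^(n-1) + 1` quotients. The singletons `{p}` separate the states, so the automaton is minimal
and has `n` quotients.
-/

namespace DFA

variable {α σ : Type*} (M : DFA α σ)

def statesAccepting (u : List α) : Set σ := {q | M.evalFrom q u ∈ M.accept}

theorem statesAccepting_append (x u : List α) :
    M.statesAccepting (x ++ u) = (M.evalFrom · x) ⁻¹' M.statesAccepting u := by
  ext q
  simp only [statesAccepting, Set.mem_ofPred_eq, Set.mem_preimage, evalFrom_of_append]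

theorem preimage_evalFrom_mem_range_statesAccepting {S : Set σ}
    (hS : S ∈ Set.range M.statesAccepting) (x : List α) :
    (M.evalFrom · x) ⁻¹' S ∈ Set.range M.statesAccepting := by
  obtain ⟨u, rfl⟩ := hS
  exact ⟨x ++ u, M.statesAccepting_append x u⟩

theorem preimage_step_mem_range_statesAccepting {S : Set σ}
    (hS : S ∈ Set.range M.statesAccepting) (a : α) :
    (M.step · a) ⁻¹' S ∈ Set.range M.statesAccepting :=
  M.preimage_evalFrom_mem_range_statesAccepting hS [a]

theorem leftQ_accepts (w : List α) :
    leftQ (M.accepts : Set (List α)) w = M.acceptsFrom (M.eval w) := by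
  ext x
  exact iff_of_eq (congrArg (· ∈ M.accept) (M.evalFrom_of_append M.start w x))

theorem isLeftIdeal_accepts (hne : (M.accepts : Set (List α)).Nonempty)
    (hsub : ∀ q, M.accepts ≤ M.acceptsFrom q) : IsLeftIdeal (M.accepts : Set (List α)) := by
  refine ⟨hne, Set.Subset.antisymm (fun x hx => ⟨[], x, hx, rfl⟩) ?_⟩
  rintro _ ⟨u, v, hv, rfl⟩
  show M.evalFrom M.start (u ++ v) ∈ M.accept
  rw [evalFrom_of_append]
  exact hsub _ hv

theorem quotCompl_accepts_of_minimal (hM : DFAMinimal M) :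
    quotCompl (M.accepts : Set (List α)) = Nat.card σ := by
  have hrange : Set.range (leftQ (M.accepts : Set (List α))) = Set.range M.acceptsFrom := by
    ext S
    simp only [Set.mem_range, leftQ_accepts]
    exact ⟨fun ⟨w, hw⟩ => ⟨_, hw⟩,
      fun ⟨q, hq⟩ => (hM.1 q).imp fun w hw => by rw [DFA.eval, hw, hq]⟩
  have hinj : Function.Injective M.acceptsFrom := fun p q hpq =>
    hM.2 p q fun w => Set.ext_iff.mp hpq w
  unfold quotCompl
  rw [hrange]
  exact Nat.card_range_of_injective hinj

theorem leftQ_reverse_accepts (w : List α) :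
    leftQ (langReverse (M.accepts : Set (List α))) w =
      {x | M.eval x.reverse ∈ M.statesAccepting w.reverse} := by
  ext x
  simp only [leftQ, langReverse, Set.mem_ofPred_eq, statesAccepting, DFA.eval,
    ← evalFrom_of_append, ← List.reverse_append]
  exact ⟨fun ⟨y, hy, hyx⟩ => hyx ▸ (List.reverse_reverse y).symm ▸ hy,
    fun h => ⟨_, h, List.reverse_reverse _⟩⟩

theorem quotCompl_reverse_accepts (hreach : ∀ q : σ, ∃ w, M.evalFrom M.start w = q) :
    quotCompl (langReverse (M.accepts : Set (List α))) =
      Nat.card (Set.range M.statesAccepting) := by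
  set Φ : Set σ → Set (List α) := fun S => {x | M.eval x.reverse ∈ S}
  have hrange : Set.range (leftQ (langReverse (M.accepts : Set (List α)))) =
      Φ '' Set.range M.statesAccepting := by
    ext L
    simp only [Set.mem_range, Set.mem_image, exists_exists_eq_and, leftQ_reverse_accepts]
    exact ⟨fun ⟨w, hw⟩ => ⟨w.reverse, hw⟩,
      fun ⟨u, hu⟩ => ⟨u.reverse, by rw [List.reverse_reverse]; exact hu⟩⟩
  have hinj : Function.Injective Φ := fun S T hST => by
    ext q
    obtain ⟨w, rfl⟩ := hreach q
    simpa [Φ, DFA.eval] using Set.ext_iff.mp hST w.reverse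
  unfold quotCompl
  rw [hrange, Nat.card_image_of_injective hinj]

end DFA

namespace Step17

open Equiv Equiv.Perm

variable {n : ℕ} (hn : 3 ≤ n)

def state0 : Fin n := ⟨0, by omega⟩

def state1 : Fin n := ⟨1, by omega⟩

def stateLast : Fin n := ⟨n - 1, by omega⟩

/-- The letter `a`; as `(0 1) * (0 1 … n-1)` it is a cycle by `Equiv.Perm.IsCycle.swap_mul`. -/
def rot : Perm (Fin n) := swap (state0 hn) (state1 hn) * finRotate n

theorem rot_apply (q : Fin n) : rot hn q = step17 n hn q 0 := by
  obtain ⟨m, rfl⟩ : ∃ m, n = m + 1 := ⟨n - 1, by omega⟩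
  have := q.isLt
  have hrot := coe_finRotate q
  ext
  simp only [rot, Perm.mul_apply, swap_apply_def, step17, state0, state1, Fin.ext_iff,
    Fin.val_last] at hrot ⊢
  split_ifs at hrot ⊢ <;> simp_all <;> omega

theorem rot_apply_eq_self_iff {q : Fin n} : rot hn q = q ↔ q = state0 hn := by
  rw [rot_apply]
  simp only [step17, state0, Fin.ext_iff]
  split_ifs <;> simp_all
  omega

theorem rot_state0 : rot hn (state0 hn) = state0 hn := (rot_apply_eq_self_iff hn).mpr rfl

theorem rot_stateLast : rot hn (stateLast hn) = state1 hn := by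
  simp [rot_apply, step17, stateLast, state1]
  omega

theorem isCycle_rot : (rot hn).IsCycle := by
  obtain ⟨m, rfl⟩ : ∃ m, n = m + 1 := ⟨n - 1, by omega⟩
  have hrot0 : finRotate (m + 1) (state0 hn) = state1 hn := by
    ext; rw [coe_finRotate, if_neg (by simp [state0, Fin.ext_iff]; omega)]; rfl
  have hrot1 : (finRotate (m + 1) (state1 hn) : ℕ) = 2 := by
    rw [coe_finRotate, if_neg (by simp [state1, Fin.ext_iff]; omega)]; rfl
  have h := (isCycle_finRotate_of_le (by omega : 2 ≤ m + 1)).swap_mul (x := state0 hn)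
    (by rw [hrot0]; simp [state0, state1, Fin.ext_iff])
    (by rw [hrot0, Ne, Fin.ext_iff, hrot1]; simp [state0])
  rwa [hrot0] at h

theorem step17_state0 {l : Fin 4} (hl : l ≠ 3) : step17 n hn (state0 hn) l = state0 hn := by
  have := l.isLt
  simp only [step17, state0, Fin.ext_iff] at hl ⊢
  split_ifs <;> simp_all <;> omega

theorem preimage_step17_one {T : Set (Fin n)} (hT : state1 hn ∈ T) :
    (step17 n hn · 1) ⁻¹' T = insert (stateLast hn) T := by
  ext q
  by_cases hq : q = stateLast hn
  · subst hq; simpa [step17, stateLast, state1] using hT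
  · simp_all [step17, stateLast, Fin.ext_iff]

theorem preimage_step17_two {T : Set (Fin n)} (hT : state0 hn ∉ T) :
    (step17 n hn · 2) ⁻¹' T = T \ {stateLast hn} := by
  ext q
  by_cases hq : q = stateLast hn
  · subst hq; simpa [step17, stateLast, state0] using hT
  · simp_all [step17, stateLast, Fin.ext_iff]

variable (F : Set (Fin n))

def dfa : DFA (Fin 4) (Fin n) := { step := step17 n hn, start := ⟨0, by omega⟩, accept := F }

theorem dfa_step : (dfa hn F).step = step17 n hn := rfl

theorem evalFrom_replicate_zero (q : Fin n) (k : ℕ) :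
    (dfa hn F).evalFrom q (List.replicate k 0) = (rot hn ^ k) q := by
  induction k generalizing q with
  | zero => rfl
  | succ k ih =>
    rw [List.replicate_succ, DFA.evalFrom_cons, ih, pow_succ, Perm.mul_apply, rot_apply]
    rfl

theorem evalFrom_state0_eq_or_forall (v : List (Fin 4)) :
    (dfa hn F).evalFrom (state0 hn) v = state0 hn ∨
      ∀ q, (dfa hn F).evalFrom q v = (dfa hn F).evalFrom (state0 hn) v := by
  induction v with
  | nil => exact Or.inl rfl
  | cons l v ih =>
    simp only [DFA.evalFrom_cons]
    by_cases hl : l = 3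
    · subst hl
      exact Or.inr fun q => rfl
    · have h0 : (dfa hn F).step (state0 hn) l = state0 hn := step17_state0 hn hl
      rw [h0]
      exact ih.imp_right fun h q => h _

theorem evalFrom_start_surjective (q : Fin n) :
    ∃ w, (dfa hn F).evalFrom (dfa hn F).start w = q := by
  by_cases hq : q = state0 hn
  · exact ⟨[], hq.symm⟩
  · obtain ⟨k, hk⟩ := (isCycle_rot hn).exists_pow_eq (x := state1 hn)
      ((rot_apply_eq_self_iff hn).not.mpr (by simp [state1, state0, Fin.ext_iff]))
      ((rot_apply_eq_self_iff hn).not.mpr hq)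
    exact ⟨3 :: List.replicate k 0, by
      rw [DFA.evalFrom_cons, evalFrom_replicate_zero, ← hk]; rfl⟩

variable {F}

theorem accepts_subset_acceptsFrom (h0F : state0 hn ∉ F) (q : Fin n) :
    (dfa hn F).accepts ≤ (dfa hn F).acceptsFrom q := by
  intro v hv
  rcases evalFrom_state0_eq_or_forall hn F v with h | h
  · exact absurd (h ▸ hv) h0F
  · show (dfa hn F).evalFrom q v ∈ F
    rw [h q]
    exact hv

theorem isLeftIdeal_accepts (hF : F.Nonempty) (h0F : state0 hn ∉ F) :
    IsLeftIdeal ((dfa hn F).accepts : Set (List (Fin 4))) := by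
  refine (dfa hn F).isLeftIdeal_accepts ?_ (accepts_subset_acceptsFrom hn h0F)
  obtain ⟨f, hf⟩ := hF
  obtain ⟨w, hw⟩ := evalFrom_start_surjective hn F f
  exact ⟨w, show _ ∈ F from hw ▸ hf⟩

theorem exists_zpow_rot_eq_stateLast {x : Fin n} (hx : x ≠ state0 hn) :
    ∃ k : ℤ, (rot hn ^ k) x = stateLast hn := by
  obtain ⟨k, hk⟩ := (isCycle_rot hn).exists_pow_eq ((rot_apply_eq_self_iff hn).not.mpr hx)
    (y := stateLast hn) (by rw [rot_stateLast]; simp [state1, stateLast, Fin.ext_iff]; omega)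
  exact ⟨k, by simpa using hk⟩

theorem preimage_zpow_rot_mem_range {S : Set (Fin n)}
    (hS : S ∈ Set.range (dfa hn F).statesAccepting) (k : ℤ) :
    ⇑(rot hn ^ k) ⁻¹' S ∈ Set.range (dfa hn F).statesAccepting := by
  obtain ⟨m, hm⟩ := mem_powers_iff_mem_zpowers.mpr (Subgroup.zpow_mem_zpowers (rot hn) k)
  have := (dfa hn F).preimage_evalFrom_mem_range_statesAccepting hS (List.replicate m 0)
  simpa only [evalFrom_replicate_zero, hm] using this

theorem sdiff_singleton_mem_range {S : Set (Fin n)}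
    (hS : S ∈ Set.range (dfa hn F).statesAccepting) (h0S : state0 hn ∉ S) (x : Fin n) :
    S \ {x} ∈ Set.range (dfa hn F).statesAccepting := by
  by_cases hx : x = state0 hn
  · rwa [hx, Set.sdiff_singleton_eq_self h0S]
  obtain ⟨k, hk⟩ := exists_zpow_rot_eq_stateLast hn hx
  have h0T : state0 hn ∉ ⇑(rot hn ^ (-k)) ⁻¹' S := by
    rwa [Set.mem_preimage, zpow_apply_eq_self_of_apply_eq_self (rot_state0 hn)]
  have := preimage_zpow_rot_mem_range hn ((dfa hn F).preimage_step_mem_range_statesAccepting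
    (preimage_zpow_rot_mem_range hn hS (-k)) 2) k
  rw [dfa_step, preimage_step17_two hn h0T] at this
  convert this using 1
  ext q
  simp [← hk, zpow_neg]

theorem insert_mem_range {S : Set (Fin n)}
    (hS : S ∈ Set.range (dfa hn F).statesAccepting) {x : Fin n} (hx : x ≠ state0 hn)
    (hrx : rot hn x ∈ S) :
    insert x S ∈ Set.range (dfa hn F).statesAccepting := by
  obtain ⟨k, hk⟩ := exists_zpow_rot_eq_stateLast hn hx
  have h1T : state1 hn ∈ ⇑(rot hn ^ (-k)) ⁻¹' S := by
    have : (rot hn ^ k) (rot hn x) = state1 hn := by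
      simpa [hk, rot_stateLast] using zpow_apply_comm (rot hn) k 1 (x := x)
    simpa [zpow_neg, ← this] using hrx
  have := preimage_zpow_rot_mem_range hn ((dfa hn F).preimage_step_mem_range_statesAccepting
    (preimage_zpow_rot_mem_range hn hS (-k)) 1) k
  rw [dfa_step, preimage_step17_one hn h1T] at this
  convert this using 1
  ext q
  simp [← hk, zpow_neg]

theorem mem_range_of_subset {S T : Set (Fin n)}
    (hS : S ∈ Set.range (dfa hn F).statesAccepting) (h0S : state0 hn ∉ S) (hTS : T ⊆ S) :
    T ∈ Set.range (dfa hn F).statesAccepting := by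
  classical
  suffices ∀ D : Finset (Fin n), S \ ↑D ∈ Set.range (dfa hn F).statesAccepting by
    simpa [Set.sdiff_sdiff_cancel_left hTS] using this (S \ T).toFinset
  intro D
  induction D using Finset.induction_on with
  | empty => simpa using hS
  | insert x D _ ih =>
    rw [Finset.coe_insert, Set.insert_eq, Set.union_comm, ← Set.sdiff_sdiff]
    exact sdiff_singleton_mem_range hn ih (fun h => h0S h.1) x

theorem setOf_exists_pow_rot_eq_mem_range {f : Fin n}
    (hf : {f} ∈ Set.range (dfa hn F).statesAccepting) (hf0 : f ≠ state0 hn) (k : ℕ) :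
    {q | ∃ i ≤ k, (rot hn ^ i) q = f} ∈ Set.range (dfa hn F).statesAccepting := by
  induction k with
  | zero => simpa using hf
  | succ k ih =>
    set y := (rot hn ^ (k + 1))⁻¹ f
    have hy : {q | ∃ i ≤ k + 1, (rot hn ^ i) q = f} =
        insert y {q | ∃ i ≤ k, (rot hn ^ i) q = f} := by
      ext q
      simp [y, Nat.le_succ_iff, or_and_right, exists_or, Equiv.eq_symm_apply, or_comm]
    have hfy : (rot hn ^ (k + 1)) y = f := by simp [y]
    rw [hy]
    refine insert_mem_range hn ih (fun hy0 => hf0 ?_) ⟨k, le_rfl, ?_⟩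
    · rw [← hfy, hy0, pow_apply_eq_self_of_apply_eq_self (rot_state0 hn)]
    · rwa [← Perm.mul_apply, ← pow_succ]

theorem compl_state0_mem_range (hF : F.Nonempty) (h0F : state0 hn ∉ F) :
    {state0 hn}ᶜ ∈ Set.range (dfa hn F).statesAccepting := by
  obtain ⟨f, hf⟩ := hF
  have hf0 : f ≠ state0 hn := fun h => h0F (h ▸ hf)
  have hsingle : {f} ∈ Set.range (dfa hn F).statesAccepting :=
    mem_range_of_subset hn ⟨[], rfl⟩ h0F (Set.singleton_subset_iff.mpr hf)
  convert setOf_exists_pow_rot_eq_mem_range hn hsingle hf0 (orderOf (rot hn)) using 1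
  ext q
  simp only [Set.mem_compl_singleton_iff, Set.mem_ofPred_eq]
  constructor
  · intro hq
    obtain ⟨i, hi⟩ := (isCycle_rot hn).exists_pow_eq ((rot_apply_eq_self_iff hn).not.mpr hq)
      ((rot_apply_eq_self_iff hn).not.mpr hf0)
    exact ⟨i % orderOf (rot hn), (Nat.mod_lt _ (orderOf_pos _)).le, by rwa [pow_mod_orderOf]⟩
  · rintro ⟨i, -, hi⟩ rfl
    exact hf0 (hi ▸ pow_apply_eq_self_of_apply_eq_self (rot_state0 hn) i)

theorem range_statesAccepting (hF : F.Nonempty) (h0F : state0 hn ∉ F) :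
    Set.range (dfa hn F).statesAccepting = insert Set.univ (𝒫 {state0 hn}ᶜ) := by
  ext S
  simp only [Set.mem_insert_iff, Set.mem_powerset_iff, Set.subset_compl_singleton_iff]
  constructor
  · rintro ⟨u, rfl⟩
    rcases evalFrom_state0_eq_or_forall hn F u with h | h
    · exact Or.inr fun hu => h0F (h ▸ hu)
    · by_cases hu : (dfa hn F).evalFrom (state0 hn) u ∈ F
      · exact Or.inl (Set.eq_univ_of_forall fun q => show _ ∈ F from (h q).symm ▸ hu)
      · exact Or.inr hu
  · rintro (rfl | h0S)
    · convert (dfa hn F).preimage_step_mem_range_statesAccepting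
        (compl_state0_mem_range hn hF h0F) 3
      ext q
      simp [dfa_step, step17, state0, Fin.ext_iff]
    · exact mem_range_of_subset hn (compl_state0_mem_range hn hF h0F) (by simp)
        (Set.subset_compl_singleton_iff.mpr h0S)

theorem ncard_range_statesAccepting (hF : F.Nonempty) (h0F : state0 hn ∉ F) :
    (Set.range (dfa hn F).statesAccepting).ncard = 2 ^ (n - 1) + 1 := by
  rw [range_statesAccepting hn hF h0F, Set.ncard_insert_of_notMem, Set.ncard_powerset,
    Set.ncard_compl, Set.ncard_singleton, Nat.card_eq_fintype_card, Fintype.card_fin]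
  simp [Set.subset_compl_singleton_iff]

theorem exists_evalFrom_mem_evalFrom_notMem (hF : F.Nonempty) (h0F : state0 hn ∉ F)
    {p q : Fin n} (hp : p ≠ state0 hn) (hpq : p ≠ q) :
    ∃ u, (dfa hn F).evalFrom p u ∈ F ∧ (dfa hn F).evalFrom q u ∉ F := by
  obtain ⟨u, hu⟩ : {p} ∈ Set.range (dfa hn F).statesAccepting := by
    rw [range_statesAccepting hn hF h0F]
    exact Or.inr (by simpa using hp.symm)
  exact ⟨u, (Set.ext_iff.mp hu p).mpr rfl, fun h => hpq ((Set.ext_iff.mp hu q).mp h).symm⟩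

theorem dfaMinimal (hF : F.Nonempty) (h0F : state0 hn ∉ F) : DFAMinimal (dfa hn F) := by
  refine ⟨evalFrom_start_surjective hn F, fun p q hpq => by_contra fun hne => ?_⟩
  by_cases hp : p = state0 hn
  · obtain ⟨u, hqu, hpu⟩ := exists_evalFrom_mem_evalFrom_notMem hn hF h0F
      (hp ▸ Ne.symm hne : q ≠ state0 hn) (Ne.symm hne)
    exact hpu ((hpq u).mpr hqu)
  · obtain ⟨u, hpu, hqu⟩ := exists_evalFrom_mem_evalFrom_notMem hn hF h0F hp hne
    exact hqu ((hpq u).mp hpu)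

theorem quotCompl_accepts (hF : F.Nonempty) (h0F : state0 hn ∉ F) :
    quotCompl ((dfa hn F).accepts : Set (List (Fin 4))) = n := by
  rw [(dfa hn F).quotCompl_accepts_of_minimal (dfaMinimal hn hF h0F), Nat.card_eq_fintype_card,
    Fintype.card_fin]

theorem quotCompl_reverse_accepts (hF : F.Nonempty) (h0F : state0 hn ∉ F) :
    quotCompl (langReverse ((dfa hn F).accepts : Set (List (Fin 4)))) = 2 ^ (n - 1) + 1 := by
  rw [(dfa hn F).quotCompl_reverse_accepts (evalFrom_start_surjective hn F), Nat.card_coe_set_eq,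
    ncard_range_statesAccepting hn hF h0F]

end Step17

/-- For every `n ≥ 3`, there is a left ideal over a
four-letter alphabet with quotient complexity `n` whose reverse has quotient
complexity exactly `2^{n-1} + 1`; a witness is the language of the DFA with
states `{0,…,n-1}`, initial state `0`, any non-empty final set `F ⊆ {1,…,n-1}`,
and letters `a, c, d, e` acting as in `step17`. -/
theorem stmt_17 (n : ℕ) (hn : 3 ≤ n) (F : Set (Fin n)) (hF : F.Nonempty)
    (hF0 : ∀ q ∈ F, (q : ℕ) ≠ 0) :
    let M : DFA (Fin 4) (Fin n) :=
      { step := step17 n hn, start := ⟨0, by omega⟩, accept := F }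
    IsLeftIdeal (M.accepts : Set (List (Fin 4))) ∧
    quotCompl (M.accepts : Set (List (Fin 4))) = n ∧
    quotCompl (langReverse (M.accepts : Set (List (Fin 4)))) = 2 ^ (n - 1) + 1 := by
  have h0F : Step17.state0 hn ∉ F := fun h => hF0 _ h rfl
  exact ⟨Step17.isLeftIdeal_accepts hn hF h0F, Step17.quotCompl_accepts hn hF h0F,
    Step17.quotCompl_reverse_accepts hn hF h0F⟩
end
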